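/- Let ω_max, k, T > 0 and μ ∈ (0,1). Let ω : ℝ → ℝ³ be continuous with |ω(t)| ≤ ω_max, and a : ℝ → ℝ³ differentiable with |a(t)| = 1, a'(t) = a(t) × ω(t), satisfying the PE condition with parameters (T, μ). Let A(t) = [[−I, [a(t)]ₓ],[[a(t)]ₓ, 0]] and let c ∈ (0,1) be a constant such that all solutions of Z' = k·A(t)·Z satisfy |Z(t)|² ≤ c^N·|Z(t₀)|² for t ∈ [t₀+N·T, t₀+(N+1)·T]. Then for every t₀ ∈ ℝ and every Z₀ ∈ ℝ⁶, the solution Z of Z'(τ) = k·A(τ)·Z(τ) with Z(t₀) = Z₀ satisfies (1/(2k√3))·|Z₀|² ≤ ∫_{t₀}^{∞} |Z(τ)|² dτ ≤ (T/(1−c))·|Z₀|². -/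

import Mathlib

open Matrix MeasureTheory intervalIntegral

noncomputable section

attribute [local instance] Matrix.normedAddCommGroup Matrix.normedSpace

/-- Cross product on ℝ³. -/
def cross3 (x y : Fin 3 → ℝ) : Fin 3 → ℝ :=
  ![x 1 * y 2 - x 2 * y 1, x 2 * y 0 - x 0 * y 2, x 0 * y 1 - x 1 * y 0]

/-- Euclidean norm on ℝ³. -/
def enorm3 (x : Fin 3 → ℝ) : ℝ := Real.sqrt (∑ i, (x i) ^ 2)

/-- Skew-symmetric cross-product matrix `[x]ₓ`. -/
def skew3 (x : Fin 3 → ℝ) : Matrix (Fin 3) (Fin 3) ℝ :=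
  !![0, -x 2, x 1; x 2, 0, -x 0; -x 1, x 0, 0]

/-- Persistent excitation condition with parameters `T, μ`. -/
def PE (a : ℝ → Fin 3 → ℝ) (T μ : ℝ) : Prop :=
  ∀ t : ℝ,
    ((T⁻¹ • ∫ τ in t..(t + T), (skew3 (a τ))ᵀ * skew3 (a τ)) -
      μ • (1 : Matrix (Fin 3) (Fin 3) ℝ)).PosSemidef

/-- Squared Euclidean norm on ℝ⁶ = ℝ³ × ℝ³. -/
def nrm6sq (Z : Fin 3 ⊕ Fin 3 → ℝ) : ℝ := ∑ i, (Z i) ^ 2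

/-- The 6×6 block matrix `A = [[−I, [a]ₓ], [[a]ₓ, 0]]`. -/
def Amat (a : Fin 3 → ℝ) : Matrix (Fin 3 ⊕ Fin 3) (Fin 3 ⊕ Fin 3) ℝ :=
  Matrix.fromBlocks (-1) (skew3 a) (skew3 a) 0

/-! The energy `|Z|²` of a solution decreases at rate `2k|Z₁|²`, `Z₁` the first block of `Z`,
because the skew-symmetric off-diagonal blocks of `A` do not contribute. Hence `e^{2kt}|Z(t)|²`
is nondecreasing, `|Z(t)|² ≥ e^{-2k(t-t₀)}|Z₀|²`, and integrating gives `|Z₀|²/(2k)` as a lower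
bound. For the upper bound, cut `[t₀, ∞)` into periods of length `T`: on the `N`-th one the energy
is at most `c^N |Z₀|²`, and the geometric series sums to `T|Z₀|²/(1-c)`. -/

open Set Real Filter Topology

theorem hasDerivAt_sum_sq {ι : Type*} [Fintype ι] {Z : ℝ → ι → ℝ} {Z' : ι → ℝ} {t : ℝ}
    (hZ : HasDerivAt Z Z' t) : HasDerivAt (fun s => ∑ i, Z s i ^ 2) (2 * (Z t ⬝ᵥ Z')) t := by
  refine (HasDerivAt.fun_sum (u := Finset.univ) (A := fun i s => Z s i ^ 2)
    fun i _ => (hasDerivAt_pi.1 hZ i).pow 2).congr_deriv ?_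
  simp only [dotProduct, Finset.mul_sum]
  exact Finset.sum_congr rfl fun i _ => by ring

theorem dotProduct_Amat_mulVec (x : Fin 3 → ℝ) (Z : Fin 3 ⊕ Fin 3 → ℝ) :
    Z ⬝ᵥ (Amat x *ᵥ Z) = -∑ j, Z (Sum.inl j) ^ 2 := by
  simp [Amat, skew3, mulVec, dotProduct, fromBlocks, Fintype.sum_sum_type, Fin.sum_univ_three]
  ring

theorem sum_inl_sq_le_nrm6sq (Z : Fin 3 ⊕ Fin 3 → ℝ) : ∑ j, Z (Sum.inl j) ^ 2 ≤ nrm6sq Z := by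
  rw [nrm6sq, Fintype.sum_sum_type]
  exact le_add_of_nonneg_right (Finset.sum_nonneg fun _ _ => sq_nonneg _)

theorem nrm6sq_nonneg (Z : Fin 3 ⊕ Fin 3 → ℝ) : 0 ≤ nrm6sq Z :=
  Finset.sum_nonneg fun _ _ => sq_nonneg _

theorem continuous_nrm6sq : Continuous nrm6sq := by
  unfold nrm6sq; fun_prop

theorem hasDerivAt_nrm6sq_of_ltv {k : ℝ} {a : ℝ → Fin 3 → ℝ} {Z : ℝ → Fin 3 ⊕ Fin 3 → ℝ}
    (hZ : ∀ t, HasDerivAt Z (k • (Amat (a t)).mulVec (Z t)) t) (t : ℝ) :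
    HasDerivAt (fun t => nrm6sq (Z t)) (-(2 * k) * ∑ j, Z t (Sum.inl j) ^ 2) t := by
  refine (hasDerivAt_sum_sq (hZ t)).congr_deriv ?_
  rw [dotProduct_smul, dotProduct_Amat_mulVec, smul_eq_mul]
  ring

theorem mul_exp_le_of_hasDerivAt {F F' : ℝ → ℝ} {r : ℝ} (hF : ∀ t, HasDerivAt F (F' t) t)
    (hF' : ∀ t, -r * F t ≤ F' t) {s t : ℝ} (hst : s ≤ t) : F s * exp (-r * (t - s)) ≤ F t := by
  have hmono : Monotone fun t => exp (r * t) * F t := by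
    refine monotone_of_hasDerivAt_nonneg
      (f' := fun t => exp (r * t) * r * F t + exp (r * t) * F' t)
      (fun t => ((hasDerivAt_id t).const_mul r).exp.mul (hF t) |>.congr_deriv (by simp))
      fun t => ?_
    have := mul_le_mul_of_nonneg_left (hF' t) (exp_pos (r * t)).le
    simp only [Pi.zero_apply]
    linarith
  have h := mul_le_mul_of_nonneg_left (hmono hst) (exp_pos (-(r * t))).le
  rwa [← mul_assoc, ← exp_add, ← mul_assoc, ← exp_add, neg_add_cancel, exp_zero, one_mul,
    mul_comm, show -(r * t) + r * s = -r * (t - s) by ring] at h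

theorem hasDerivAt_exp_neg_mul_sub {r : ℝ} (hr : r ≠ 0) (s t : ℝ) :
    HasDerivAt (fun t => -r⁻¹ * exp (-r * (t - s))) (exp (-r * (t - s))) t := by
  refine ((((hasDerivAt_id t).sub_const s).const_mul (-r)).exp.const_mul (-r⁻¹)).congr_deriv ?_
  simp [field]

theorem tendsto_neg_inv_mul_exp_neg_mul_sub_atTop {r : ℝ} (hr : 0 < r) (s : ℝ) :
    Tendsto (fun t => -r⁻¹ * exp (-r * (t - s))) atTop (𝓝 0) := by
  have hlin : Tendsto (fun t => -r * (t + -s)) atTop atBot :=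
    (tendsto_atTop_add_const_right _ (-s) tendsto_id).const_mul_atTop_of_neg (neg_neg_of_pos hr)
  simpa [sub_eq_add_neg] using (tendsto_exp_atBot.comp hlin).const_mul (-r⁻¹)

theorem integral_exp_neg_mul_sub_Ioi {r : ℝ} (hr : 0 < r) (s : ℝ) :
    ∫ t in Ioi s, exp (-r * (t - s)) = r⁻¹ := by
  rw [integral_Ioi_of_hasDerivAt_of_nonneg' (fun t _ => hasDerivAt_exp_neg_mul_sub hr.ne' s t)
    (fun _ _ => (exp_pos _).le) (tendsto_neg_inv_mul_exp_neg_mul_sub_atTop hr s)]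
  simp

theorem integrableOn_exp_neg_mul_sub_Ioi {r : ℝ} (hr : 0 < r) (s : ℝ) :
    IntegrableOn (fun t => exp (-r * (t - s))) (Ioi s) :=
  integrableOn_Ioi_deriv_of_nonneg' (fun t _ => hasDerivAt_exp_neg_mul_sub hr.ne' s t)
    (fun _ _ => (exp_pos _).le) (tendsto_neg_inv_mul_exp_neg_mul_sub_atTop hr s)

theorem div_le_setIntegral_Ioi_of_mul_exp_le {F : ℝ → ℝ} {r s : ℝ} (hr : 0 < r)
    (hF : IntegrableOn F (Ioi s)) (hlow : ∀ t, s ≤ t → F s * exp (-r * (t - s)) ≤ F t) :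
    F s / r ≤ ∫ t in Ioi s, F t :=
  calc F s / r = ∫ t in Ioi s, F s * exp (-r * (t - s)) := by
        rw [MeasureTheory.integral_const_mul, integral_exp_neg_mul_sub_Ioi hr, div_eq_mul_inv]
    _ ≤ ∫ t in Ioi s, F t :=
        setIntegral_mono_on ((integrableOn_exp_neg_mul_sub_Ioi hr s).const_mul _) hF
          measurableSet_Ioi fun t ht => hlow t (le_of_lt ht)

theorem lintegral_Ici_eq_tsum_Ico {u : ℕ → ℝ} (hu : Monotone u) (hu' : ¬BddAbove (range u))
    (g : ℝ → ENNReal) :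
    ∫⁻ t in Ici (u 0), g t = ∑' n, ∫⁻ t in Ico (u n) (u (n + 1)), g t := by
  have hdisj : Pairwise (Function.onFun Disjoint fun n => Ico (u n) (u (n + 1))) := by
    simpa only [Order.succ_eq_add_one] using hu.pairwise_disjoint_on_Ico_succ
  have hcover : ⋃ n, Ico (u n) (u (n + 1)) = Ici (u 0) := by
    simpa only [Order.succ_eq_add_one, Nat.bot_eq_zero] using
      iUnion_Ico_map_succ_eq_Ici (fun n => hu (Nat.zero_le n)) hu'
  rw [← hcover, lintegral_iUnion (fun _ => measurableSet_Ico) hdisj]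

theorem lintegral_Ici_le_of_le_geometric {f : ℝ → ℝ} {s T c M : ℝ} (hT : 0 < T) (hc0 : 0 ≤ c)
    (hc1 : c < 1) (hM : 0 ≤ M)
    (hf : ∀ n : ℕ, ∀ t ∈ Ico (s + n * T) (s + (n + 1) * T), f t ≤ c ^ n * M) :
    ∫⁻ t in Ici s, ENNReal.ofReal (f t) ≤ ENNReal.ofReal (T / (1 - c) * M) := by
  set u : ℕ → ℝ := fun n => s + n * T
  have hu : Monotone u := fun m n hmn => by
    simp only [u]; gcongr
  have hu' : ¬BddAbove (range u) := by
    rintro ⟨b, hb⟩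
    obtain ⟨n, hn⟩ := exists_nat_gt ((b - s) / T)
    have := hb ⟨n, rfl⟩
    rw [div_lt_iff₀ hT] at hn
    simp only [u] at this
    linarith
  have hpiece (n : ℕ) : ∫⁻ t in Ico (u n) (u (n + 1)), ENNReal.ofReal (f t)
      ≤ ENNReal.ofReal c ^ n * ENNReal.ofReal (M * T) :=
    calc ∫⁻ t in Ico (u n) (u (n + 1)), ENNReal.ofReal (f t)
        ≤ ∫⁻ _ in Ico (u n) (u (n + 1)), ENNReal.ofReal (c ^ n * M) :=
          setLIntegral_mono measurable_const fun t ht =>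
            ENNReal.ofReal_le_ofReal (hf n t (by simpa [u] using ht))
      _ = ENNReal.ofReal c ^ n * ENNReal.ofReal (M * T) := by
          rw [setLIntegral_const, Real.volume_Ico, ← ENNReal.ofReal_pow hc0,
            ← ENNReal.ofReal_mul (by positivity), ← ENNReal.ofReal_mul (by positivity)]
          simp only [u]; push_cast; ring_nf
  have hs : u 0 = s := by simp [u]
  calc ∫⁻ t in Ici s, ENNReal.ofReal (f t)
      = ∑' n, ∫⁻ t in Ico (u n) (u (n + 1)), ENNReal.ofReal (f t) := by
        rw [← hs, lintegral_Ici_eq_tsum_Ico hu hu']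
    _ ≤ ∑' n : ℕ, ENNReal.ofReal c ^ n * ENNReal.ofReal (M * T) := ENNReal.tsum_le_tsum hpiece
    _ = ENNReal.ofReal (T / (1 - c) * M) := by
        rw [ENNReal.tsum_mul_right, ENNReal.tsum_geometric, ← ENNReal.ofReal_one,
          ← ENNReal.ofReal_sub _ hc0, ← ENNReal.ofReal_inv_of_pos (by linarith),
          ← ENNReal.ofReal_mul (by simp [hc1.le]), div_eq_mul_inv]
        ring_nf

section GeometricDecay

variable {f : ℝ → ℝ} {s T c : ℝ}

theorem integrableOn_Ioi_of_le_geometric (hfm : AEStronglyMeasurable f (volume.restrict (Ioi s)))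
    (hf0 : ∀ t, 0 ≤ f t) (hT : 0 < T) (hc0 : 0 ≤ c) (hc1 : c < 1)
    (hf : ∀ n : ℕ, ∀ t ∈ Ico (s + n * T) (s + (n + 1) * T), f t ≤ c ^ n * f s) :
    IntegrableOn f (Ioi s) := by
  refine ⟨hfm, ?_⟩
  rw [hasFiniteIntegral_iff_ofReal (ae_of_all _ hf0), setLIntegral_congr Ioi_ae_eq_Ici]
  exact (lintegral_Ici_le_of_le_geometric hT hc0 hc1 (hf0 s) hf).trans_lt ENNReal.ofReal_lt_top

theorem setIntegral_Ioi_le_of_le_geometric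
    (hfm : AEStronglyMeasurable f (volume.restrict (Ioi s)))
    (hf0 : ∀ t, 0 ≤ f t) (hT : 0 < T) (hc0 : 0 ≤ c) (hc1 : c < 1)
    (hf : ∀ n : ℕ, ∀ t ∈ Ico (s + n * T) (s + (n + 1) * T), f t ≤ c ^ n * f s) :
    ∫ t in Ioi s, f t ≤ T / (1 - c) * f s := by
  rw [integral_eq_lintegral_of_nonneg_ae (ae_of_all _ hf0) hfm, setLIntegral_congr Ioi_ae_eq_Ici]
  have : 0 ≤ T / (1 - c) := div_nonneg hT.le (by linarith)
  exact ENNReal.toReal_le_of_le_ofReal (mul_nonneg this (hf0 s))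
    (lintegral_Ici_le_of_le_geometric hT hc0 hc1 (hf0 s) hf)

end GeometricDecay

theorem ltv_energy_integral_bounds
    (k T : ℝ) (hk : 0 < k) (hT : 0 < T)
    (a : ℝ → Fin 3 → ℝ)
    (c : ℝ) (hc0 : 0 < c) (hc1 : c < 1)
    (hdecay : ∀ Z : ℝ → Fin 3 ⊕ Fin 3 → ℝ,
      (∀ t, HasDerivAt Z (k • (Amat (a t)).mulVec (Z t)) t) →
      ∀ (t₀ : ℝ) (N : ℕ), ∀ t ∈ Set.Icc (t₀ + N * T) (t₀ + (N + 1) * T),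
        nrm6sq (Z t) ≤ c ^ N * nrm6sq (Z t₀)) :
    ∀ (t₀ : ℝ) (Z₀ : Fin 3 ⊕ Fin 3 → ℝ) (Z : ℝ → Fin 3 ⊕ Fin 3 → ℝ),
      (∀ t, HasDerivAt Z (k • (Amat (a t)).mulVec (Z t)) t) → Z t₀ = Z₀ →
      (1 / (2 * k * Real.sqrt 3)) * nrm6sq Z₀ ≤ (∫ τ in Set.Ioi t₀, nrm6sq (Z τ)) ∧
      (∫ τ in Set.Ioi t₀, nrm6sq (Z τ)) ≤ (T / (1 - c)) * nrm6sq Z₀ := by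
  rintro t₀ _ Z hZ rfl
  have hZc : Continuous Z := Differentiable.continuous fun t => (hZ t).differentiableAt
  have hFm : AEStronglyMeasurable (fun t => nrm6sq (Z t)) (volume.restrict (Ioi t₀)) :=
    (continuous_nrm6sq.comp hZc).aestronglyMeasurable
  have hgeom (n : ℕ) (t : ℝ) (ht : t ∈ Ico (t₀ + n * T) (t₀ + (n + 1) * T)) :
      nrm6sq (Z t) ≤ c ^ n * nrm6sq (Z t₀) :=
    hdecay Z hZ t₀ n t (Ico_subset_Icc_self ht)
  have hlow (t : ℝ) (ht : t₀ ≤ t) : nrm6sq (Z t₀) * exp (-(2 * k) * (t - t₀)) ≤ nrm6sq (Z t) :=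
    mul_exp_le_of_hasDerivAt (hasDerivAt_nrm6sq_of_ltv hZ)
      (fun t => mul_le_mul_of_nonpos_left (sum_inl_sq_le_nrm6sq _) (by linarith)) ht
  refine ⟨?_, setIntegral_Ioi_le_of_le_geometric hFm (fun t => nrm6sq_nonneg _) hT hc0.le hc1 hgeom⟩
  calc 1 / (2 * k * √3) * nrm6sq (Z t₀) ≤ nrm6sq (Z t₀) / (2 * k) := by
        rw [one_div_mul_eq_div]
        exact div_le_div_of_nonneg_left (nrm6sq_nonneg _) (by positivity)
          (le_mul_of_one_le_right (by positivity) (Real.one_le_sqrt.2 (by norm_num)))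
    _ ≤ ∫ t in Ioi t₀, nrm6sq (Z t) :=
        div_le_setIntegral_Ioi_of_mul_exp_le (by positivity)
          (integrableOn_Ioi_of_le_geometric hFm (fun t => nrm6sq_nonneg _) hT hc0.le hc1 hgeom) hlow

end
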